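/- arXiv:math/0512558 — 7 statements merged into one kernel-verified Lean document; each statement's English description precedes it below -/
import Mathlib

section
/- Let A be a finite-dimensional complete left-symmetric algebra over 𝕜, where 𝕜 = ℝ or 𝕜 = ℂ, and assume A ≠ 0. Then for every y ∈ A the left-multiplication operator L(y) is degenerate, i.e., det L(y) = 0 (equivalently, L(y) is not bijective). -/
/-- In a nonzero finite-dimensional complete left-symmetric algebra over `ℝ` or `ℂ`,
every left-multiplication operator `L(y)` is degenerate: `det L(y) = 0`
(equivalently, `L(y)` is not bijective). -/
theorem leftSymmetric_complete_L_degenerate (𝕜 : Type*) [RCLike 𝕜] (A : Type*)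
    [AddCommGroup A] [Module 𝕜 A] [FiniteDimensional 𝕜 A] [Nontrivial A]
    (mul : A →ₗ[𝕜] A →ₗ[𝕜] A)
    (hls : ∀ x y z : A,
      mul x (mul y z) - mul (mul x y) z = mul y (mul x z) - mul (mul y x) z)
    (hcomplete : ∀ x : A, IsNilpotent (mul.flip x)) :
    ∀ y : A, LinearMap.det (mul y) = 0 := by
  intro y
  by_contra hdet
  -- `L(y)` is bijective, hence surjective
  have hsurj : Function.Surjective (mul y) := by
    have h := ((mul y).equivOfDetNeZero hdet).surjective
    exact h
  -- pick `e` with `y·e = y`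
  obtain ⟨e, he⟩ := hsurj y
  -- `R(e)` fixes `y`
  have hfix : ∀ n : ℕ, ((mul.flip e) ^ n) y = y := by
    intro n
    induction n with
    | zero => simp
    | succ n ih =>
      have h1 : (mul.flip e) y = y := by simpa using he
      rw [pow_succ, Module.End.mul_apply, h1, ih]
  obtain ⟨n, hn⟩ := hcomplete e
  have hy : y = 0 := by
    have := hfix n
    rw [hn] at this
    simpa using this.symm
  -- but then `L(y) = 0` is surjective on a nontrivial space, contradiction
  obtain ⟨a, ha⟩ := exists_ne (0 : A)
  obtain ⟨x, hx⟩ := hsurj a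
  rw [hy] at hx
  simp at hx
  exact ha hx.symm
end

section
/- Let A be a finite-dimensional real left-symmetric algebra, and let A_ℂ = ℂ ⊗_ℝ A be its complexification, equipped with the ℂ-bilinear multiplication obtained by base change of the multiplication of A (so that (a⊗x)·(b⊗y) = ab ⊗ x·y). Then A is complete if and only if A_ℂ is complete. -/
open TensorProduct Polynomial

/-!
Right multiplication on `ℂ ⊗[ℝ] A` by a real point `1 ⊗ x` is the base change of `R(x)`, and base
change along the faithfully flat `ℝ → ℂ` neither creates nor destroys nilpotency. An arbitrary
point is `1 ⊗ u + I • (1 ⊗ v)`, with right multiplication `B + I • C` where `B + t • C` is nilpotent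
for every real `t`; nilpotency is the polynomial condition `charpoly = X ^ n` in `t`, so holding
for infinitely many `t` it holds at `t = I`.
-/

theorem Matrix.charpoly_add_smul_eq_of_infinite {R ι : Type*} [CommRing R] [IsDomain R]
    [Fintype ι] [DecidableEq ι] (B C : Matrix ι ι R) {S : Set R} (hS : S.Infinite) {p : R[X]}
    (h : ∀ t ∈ S, (B + t • C).charpoly = p) (t : R) : (B + t • C).charpoly = p := by
  -- `B + X • C` over `R[X]` specialises to every `B + t • C`.
  set D : Matrix ι ι R[X] := B.map Polynomial.C + (X : R[X]) • C.map Polynomial.C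
  have hD : ∀ a : R, (B + a • C).charpoly = D.charpoly.map (evalRingHom a) := fun a ↦ by
    rw [← Matrix.charpoly_map]
    congr 1
    ext i j
    simp [D]
    ring
  have hDp : D.charpoly = p.map Polynomial.C := by
    ext1 j
    refine eq_of_infinite_eval_eq _ _ (hS.mono fun a ha ↦ ?_)
    simpa using congrArg (coeff · j) ((hD a).symm.trans (h a ha))
  ext j
  simp [hD, hDp]

theorem LinearMap.isNilpotent_add_smul_of_infinite {K M : Type*} [Field K] [AddCommGroup M]
    [Module K M] [FiniteDimensional K M] (B C : Module.End K M) {S : Set K} (hS : S.Infinite)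
    (h : ∀ t ∈ S, IsNilpotent (B + t • C)) (t : K) : IsNilpotent (B + t • C) := by
  set b := Module.Free.chooseBasis K M
  have hchar : ∀ a : K, (B + a • C).charpoly
      = (LinearMap.toMatrix b b B + a • LinearMap.toMatrix b b C).charpoly := fun a ↦ by
    rw [← LinearMap.charpoly_toMatrix _ b, map_add, map_smul]
  simp only [LinearMap.isNilpotent_iff_charpoly, hchar] at h ⊢
  exact Matrix.charpoly_add_smul_eq_of_infinite _ _ hS h t

theorem LinearMap.isNilpotent_baseChange_iff {R S M : Type*} [CommRing R] [CommRing S]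
    [Algebra R S] [FaithfulSMul R S] [AddCommGroup M] [Module R M] [Module.Flat R M]
    (f : Module.End R M) : IsNilpotent (f.baseChange S) ↔ IsNilpotent f :=
  IsNilpotent.map_iff (f := Module.End.baseChangeHom R S M)
    (LinearMap.baseChangeHom_injective R M S)

theorem Complex.exists_eq_one_tmul_add_I_smul {M : Type*} [AddCommGroup M] [Module ℝ M]
    (z : ℂ ⊗[ℝ] M) : ∃ u v : M, z = (1 : ℂ) ⊗ₜ u + I • (1 : ℂ) ⊗ₜ v := by
  obtain ⟨c, rfl⟩ := TensorProduct.eq_repr_basis_left Complex.basisOneI z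
  refine ⟨c 0, c 1, ?_⟩
  simp [Finsupp.sum_fintype, Fin.sum_univ_two, TensorProduct.smul_tmul']

theorem flip_one_tmul_eq_baseChange {R S M : Type*} [CommRing R] [CommRing S] [Algebra R S]
    [AddCommGroup M] [Module R M] {mul : M →ₗ[R] M →ₗ[R] M}
    {mulS : S ⊗[R] M →ₗ[S] S ⊗[R] M →ₗ[S] S ⊗[R] M}
    (hmulS : ∀ (a b : S) (x y : M), mulS (a ⊗ₜ x) (b ⊗ₜ y) = (a * b) ⊗ₜ mul x y) (x : M) :
    mulS.flip (1 ⊗ₜ x) = (mul.flip x).baseChange S :=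
  TensorProduct.AlgebraTensorModule.ext fun b y ↦ by simp [hmulS]

theorem leftSymmetric_complete_iff_complexification_complete_general (A : Type*)
    [AddCommGroup A] [Module ℝ A] [FiniteDimensional ℝ A]
    (mul : A →ₗ[ℝ] A →ₗ[ℝ] A)
    (mulC : (ℂ ⊗[ℝ] A) →ₗ[ℂ] (ℂ ⊗[ℝ] A) →ₗ[ℂ] (ℂ ⊗[ℝ] A))
    (hmulC : ∀ (a b : ℂ) (x y : A),
      mulC (a ⊗ₜ[ℝ] x) (b ⊗ₜ[ℝ] y) = (a * b) ⊗ₜ[ℝ] (mul x y)) :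
    (∀ x : A, IsNilpotent (mul.flip x)) ↔
      (∀ z : ℂ ⊗[ℝ] A, IsNilpotent (mulC.flip z)) := by
  have hR (x : A) : mulC.flip (1 ⊗ₜ x) = (mul.flip x).baseChange ℂ :=
    flip_one_tmul_eq_baseChange hmulC x
  refine ⟨fun hA z ↦ ?_, fun hC x ↦ ?_⟩
  · obtain ⟨u, v, rfl⟩ := Complex.exists_eq_one_tmul_add_I_smul z
    rw [map_add, map_smul]
    refine LinearMap.isNilpotent_add_smul_of_infinite _ _
      (Set.infinite_range_of_injective Complex.ofReal_injective) ?_ Complex.I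
    rintro _ ⟨r, rfl⟩
    have hreal : (r : ℂ) • (1 : ℂ) ⊗ₜ[ℝ] v = 1 ⊗ₜ (r • v) := by
      rw [TensorProduct.tmul_smul, ← algebraMap_smul ℂ r, Complex.coe_algebraMap]
    rw [← map_smul, hreal, ← map_add, ← TensorProduct.tmul_add, hR,
      LinearMap.isNilpotent_baseChange_iff]
    exact hA _
  · rw [← LinearMap.isNilpotent_baseChange_iff (S := ℂ), ← hR]
    exact hC _

/-- A finite-dimensional real left-symmetric algebra is complete if and only if its
complexification `ℂ ⊗[ℝ] A`, with the base-changed multiplication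
`(a⊗x)·(b⊗y) = ab ⊗ x·y`, is complete. -/
theorem leftSymmetric_complete_iff_complexification_complete (A : Type*)
    [AddCommGroup A] [Module ℝ A] [FiniteDimensional ℝ A]
    (mul : A →ₗ[ℝ] A →ₗ[ℝ] A)
    (hls : ∀ x y z : A,
      mul x (mul y z) - mul (mul x y) z = mul y (mul x z) - mul (mul y x) z)
    (mulC : (ℂ ⊗[ℝ] A) →ₗ[ℂ] (ℂ ⊗[ℝ] A) →ₗ[ℂ] (ℂ ⊗[ℝ] A))
    (hmulC : ∀ (a b : ℂ) (x y : A),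
      mulC (a ⊗ₜ[ℝ] x) (b ⊗ₜ[ℝ] y) = (a * b) ⊗ₜ[ℝ] (mul x y)) :
    (∀ x : A, IsNilpotent (mul.flip x)) ↔
      (∀ z : ℂ ⊗[ℝ] A, IsNilpotent (mulC.flip z)) :=
  leftSymmetric_complete_iff_complexification_complete_general A mul mulC hmulC
end

section
/- Let A be a finite-dimensional complete left-symmetric algebra over ℂ and let H be a Cartan subalgebra of the commutator Lie algebra of A for which the root decomposition is canonical (i.e., ⋂_{x∈H} maxGenEigenspace(L(x), χ(x)) = ⋂_{x∈H} maxGenEigenspace(ad(x), χ(x)) for all χ : H → ℂ). Then for every x ∈ H the operators L(x) and ad(x) have equal semisimple parts: there exists a semisimple (diagonalizable) linear endomorphism S of A commuting with L(x) and with ad(x) such that L(x) − S and ad(x) − S are both nilpotent. -/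
/-!
The joint generalized eigenspaces `V χ` of `ad(H)` span `A` because `H` is nilpotent, and by
canonicity `V χ` is also the joint generalized eigenspace of `L(H)`. Since the generalized
eigenspaces of `L(x)` are independent, the generalized `c`-eigenspace of `L(x)` is the sum of the
`V χ` with `χ x = c`, hence lies in the generalized `c`-eigenspace of `ad(x)`. The semisimple
parts of `L(x)` and `ad(x)` therefore both act as `c` on it, and these subspaces span `A`.
-/

theorem iSupIndep.eq_iSup_fiber_of_iSup_eq_top {α ι κ : Type*} [CompleteLattice α]
    [IsModularLattice α] {F : κ → α} (hF : iSupIndep F) {W : ι → α} {μ : ι → κ}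
    (hW : ⨆ i, W i = ⊤) (hWF : ∀ i, W i ≤ F (μ i)) (k : κ) :
    F k = ⨆ (i) (_ : μ i = k), W i := by
  set X := ⨆ (i) (_ : μ i = k), W i
  set Y := ⨆ (i) (_ : μ i ≠ k), W i
  have hXY : X ⊔ Y = ⊤ := by
    refine eq_top_iff.mpr (hW ▸ iSup_le fun i => ?_)
    by_cases h : μ i = k
    · exact le_sup_of_le_left (le_iSup₂ (f := fun i (_ : μ i = k) => W i) i h)
    · exact le_sup_of_le_right (le_iSup₂ (f := fun i (_ : μ i ≠ k) => W i) i h)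
  have hX : X ≤ F k := iSup₂_le fun i h => h ▸ hWF i
  have hY : Disjoint (F k) Y := (hF k).mono_right <|
    iSup₂_le fun i h => (hWF i).trans (le_iSup₂ (f := fun j (_ : j ≠ k) => F j) (μ i) h)
  calc F k = (X ⊔ Y) ⊓ F k := by rw [hXY, top_inf_eq]
    _ = X ⊔ Y ⊓ F k := sup_inf_assoc_of_le Y hX
    _ = X := by rw [hY.symm.eq_bot, sup_bot_eq]

theorem LieSubalgebra.iSup_iInf_maxGenEigenspace_ad_eq_top {K L : Type*} [Field K]
    [IsAlgClosed K] [LieRing L] [LieAlgebra K L] [FiniteDimensional K L]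
    (H : LieSubalgebra K L) [LieRing.IsNilpotent H] :
    ⨆ χ : H → K, ⨅ y : H, (LieAlgebra.ad K L y).maxGenEigenspace (χ y) = ⊤ := by
  have := LieModule.iSup_genWeightSpace_eq_top K H L
  rw [← LieSubmodule.iSup_toSubmodule_eq_top] at this
  simp only [LieModule.genWeightSpace, LieSubmodule.iInf_toSubmodule] at this
  exact this

namespace Module.End

lemma apply_eq_smul_of_mem_maxGenEigenspace_of_mem_adjoin {R M : Type*} [CommRing R]
    [AddCommGroup M] [Module R M] {f n s : End R M} (hs : s ∈ Algebra.adjoin R {f})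
    (hn : IsNilpotent n) (hss : s.IsSemisimple) (hf : f = n + s) {μ : R} {v : M}
    (hv : v ∈ f.maxGenEigenspace μ) : s v = μ • v :=
  apply_eq_of_mem_of_comm_of_isFinitelySemisimple_of_isNil hv
    (Algebra.commute_of_mem_adjoin_self hs) hss.isFinitelySemisimple
    (by rwa [hf, add_sub_cancel_right])

theorem exists_isSemisimple_isNilpotent_sub_of_maxGenEigenspace_le {K V : Type*} [Field K]
    [IsAlgClosed K] [AddCommGroup V] [Module K V] [FiniteDimensional K V] {f g : End K V}
    (hfg : ∀ μ, f.maxGenEigenspace μ ≤ g.maxGenEigenspace μ) :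
    ∃ s : End K V, s.IsSemisimple ∧ Commute s f ∧ Commute s g ∧
      IsNilpotent (f - s) ∧ IsNilpotent (g - s) := by
  obtain ⟨nf, -, sf, hsf, hnf, hsf_ss, hf⟩ := f.exists_isNilpotent_isSemisimple
  obtain ⟨ng, -, sg, hsg, hng, hsg_ss, hg⟩ := g.exists_isNilpotent_isSemisimple
  have hsfg : sf = sg := by
    rw [← LinearMap.eqLocus_eq_top, eq_top_iff, ← f.iSup_maxGenEigenspace_eq_top, iSup_le_iff]
    intro μ v hv
    rw [LinearMap.mem_eqLocus,
      apply_eq_smul_of_mem_maxGenEigenspace_of_mem_adjoin hsf hnf hsf_ss hf hv,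
      apply_eq_smul_of_mem_maxGenEigenspace_of_mem_adjoin hsg hng hsg_ss hg (hfg μ hv)]
  subst hsfg
  refine ⟨sf, hsf_ss, (Algebra.commute_of_mem_adjoin_self hsf).symm,
    (Algebra.commute_of_mem_adjoin_self hsg).symm, ?_, ?_⟩
  · rwa [hf, add_sub_cancel_right]
  · rwa [hg, add_sub_cancel_right]

end Module.End

theorem leftSymmetric_canonical_equal_semisimple_parts_general (A : Type*)
    [LieRing A] [LieAlgebra ℂ A] [FiniteDimensional ℂ A]
    (mul : A →ₗ[ℂ] A →ₗ[ℂ] A)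
    (hbr : ∀ x y : A, ⁅x, y⁆ = mul x y - mul y x)
    (H : LieSubalgebra ℂ A) (hH : H.IsCartanSubalgebra)
    (hcanon : ∀ χ : H → ℂ,
      (⨅ x : H, Module.End.maxGenEigenspace (mul (x : A)) (χ x)) =
        ⨅ x : H, Module.End.maxGenEigenspace (mul (x : A) - mul.flip (x : A)) (χ x)) :
    ∀ x ∈ H, ∃ S : Module.End ℂ A, S.IsSemisimple ∧
      Commute S (mul x) ∧ Commute S (mul x - mul.flip x) ∧
      IsNilpotent (mul x - S) ∧ IsNilpotent ((mul x - mul.flip x) - S) := by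
  intro x hx
  have ad_eq : ∀ y : A, LieAlgebra.ad ℂ A y = mul y - mul.flip y := fun y => by
    ext z; simp [hbr]
  set V : (H → ℂ) → Submodule ℂ A :=
    fun χ => ⨅ y : H, Module.End.maxGenEigenspace (mul (y : A)) (χ y)
  have hV : ⨆ χ, V χ = ⊤ := by
    have := H.iSup_iInf_maxGenEigenspace_ad_eq_top
    simp only [ad_eq, ← hcanon] at this
    exact this
  have hVL : ∀ χ, V χ ≤ Module.End.maxGenEigenspace (mul x) (χ ⟨x, hx⟩) := fun χ =>
    iInf_le (fun y : H => Module.End.maxGenEigenspace (mul (y : A)) (χ y)) ⟨x, hx⟩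
  have hVad : ∀ χ, V χ ≤ Module.End.maxGenEigenspace (mul x - mul.flip x) (χ ⟨x, hx⟩) :=
    fun χ => (hcanon χ).trans_le <| iInf_le
      (fun y : H => Module.End.maxGenEigenspace (mul (y : A) - mul.flip (y : A)) (χ y)) ⟨x, hx⟩
  refine Module.End.exists_isSemisimple_isNilpotent_sub_of_maxGenEigenspace_le fun c => ?_
  rw [(Module.End.independent_maxGenEigenspace (mul x)).eq_iSup_fiber_of_iSup_eq_top hV hVL c]
  exact iSup₂_le fun χ hχ => hχ ▸ hVad χ

/-- If `H` is a Cartan subalgebra of a finite-dimensional complete left-symmetric algebra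
over `ℂ` for which the root decomposition is canonical, then for every `x ∈ H` the
operators `L(x)` and `ad(x)` have equal semisimple parts. -/
theorem leftSymmetric_canonical_equal_semisimple_parts (A : Type*)
    [LieRing A] [LieAlgebra ℂ A] [FiniteDimensional ℂ A]
    (mul : A →ₗ[ℂ] A →ₗ[ℂ] A)
    (hbr : ∀ x y : A, ⁅x, y⁆ = mul x y - mul y x)
    (hls : ∀ x y z : A,
      mul x (mul y z) - mul (mul x y) z = mul y (mul x z) - mul (mul y x) z)
    (hcomplete : ∀ x : A, IsNilpotent (mul.flip x))
    (H : LieSubalgebra ℂ A) (hH : H.IsCartanSubalgebra)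
    (hcanon : ∀ χ : H → ℂ,
      (⨅ x : H, Module.End.maxGenEigenspace (mul (x : A)) (χ x)) =
        ⨅ x : H, Module.End.maxGenEigenspace (mul (x : A) - mul.flip (x : A)) (χ x)) :
    ∀ x ∈ H, ∃ S : Module.End ℂ A, S.IsSemisimple ∧
      Commute S (mul x) ∧ Commute S (mul x - mul.flip x) ∧
      IsNilpotent (mul x - S) ∧ IsNilpotent ((mul x - mul.flip x) - S) :=
  leftSymmetric_canonical_equal_semisimple_parts_general A mul hbr H hH hcanon
end

section
/- Let A be a finite-dimensional complete left-symmetric algebra over ℂ and let H be a Cartan subalgebra of the commutator Lie algebra of A for which the root decomposition is canonical. For a function χ : H → ℂ write A^χ = ⋂_{x∈H} maxGenEigenspace(L(x), χ(x)). Then for all functions λ, μ : H → ℂ, A^λ · A^μ ⊆ A^{λ+μ}, i.e., if v ∈ A^λ and w ∈ A^μ then v·w ∈ A^{λ+μ} (where (λ+μ)(x) = λ(x)+μ(x)). In particular, A^0 is a subalgebra of A. -/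
/-!
Left symmetry says exactly that `L(x)(v·w) = (ad(x) v)·w + v·(L(x) w)`, so `L(x)` acts on products
like a derivation with respect to the pair `(ad(x), L(x))`. By the binomial theorem (applied on
`A ⊗ A`, where `ad(x) ⊗ 1` and `1 ⊗ L(x)` commute) such a map sends the generalized
`α`-eigenvectors of `ad(x)` times the generalized `β`-eigenvectors of `L(x)` into the generalized
`(α + β)`-eigenspace of `L(x)`. Canonicity lets us read `v ∈ A^λ` in terms of `ad` instead of `L`.
-/

open TensorProduct

section

variable {R M N P : Type*} [CommRing R] [AddCommGroup M] [Module R M] [AddCommGroup N] [Module R N]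
  [AddCommGroup P] [Module R P]

namespace Module.End

lemma map_mem_maxGenEigenspace_of_comp_eq {f : End R M} {g : End R N} {φ : M →ₗ[R] N}
    (h : g ∘ₗ φ = φ ∘ₗ f) {μ : R} {m : M} (hm : m ∈ f.maxGenEigenspace μ) :
    φ m ∈ g.maxGenEigenspace μ := by
  rw [mem_maxGenEigenspace] at hm ⊢
  obtain ⟨k, hk⟩ := hm
  have hμ : (g - μ • 1) ∘ₗ φ = φ ∘ₗ (f - μ • 1) := by
    ext m
    simpa using congr($h m)
  refine ⟨k, ?_⟩
  rw [← LinearMap.comp_apply, commute_pow_left_of_commute hμ, LinearMap.comp_apply, hk, map_zero]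

lemma tmul_mem_maxGenEigenspace_rTensor_add_lTensor {f : End R M} {g : End R N} {μ ν : R}
    {m : M} {n : N} (hm : m ∈ f.maxGenEigenspace μ) (hn : n ∈ g.maxGenEigenspace ν) :
    m ⊗ₜ n ∈ maxGenEigenspace (f.rTensor N + g.lTensor M) (μ + ν) := by
  have hm' : m ⊗ₜ n ∈ maxGenEigenspace (f.rTensor N) μ :=
    map_mem_maxGenEigenspace_of_comp_eq (φ := (TensorProduct.mk R M N).flip n)
      (by ext; simp) hm
  have hn' : m ⊗ₜ n ∈ maxGenEigenspace (g.lTensor M) ν :=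
    map_mem_maxGenEigenspace_of_comp_eq (φ := TensorProduct.mk R M N m) (by ext; simp) hn
  have hcomm : Commute (f.rTensor N) (g.lTensor M) := by
    ext; simp
  exact genEigenspace_inf_le_add _ _ _ _ ⊤ ⊤ hcomm ⟨hm', hn'⟩

end Module.End

lemma LinearMap.apply_mem_maxGenEigenspace_of_leibniz
    (B : M →ₗ[R] N →ₗ[R] P) {f : Module.End R M} {g : Module.End R N} {h : Module.End R P}
    (hB : ∀ m n, h (B m n) = B (f m) n + B m (g n)) {μ ν : R} {m : M} {n : N}
    (hm : m ∈ f.maxGenEigenspace μ) (hn : n ∈ g.maxGenEigenspace ν) :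
    B m n ∈ h.maxGenEigenspace (μ + ν) := by
  have hlift : h ∘ₗ TensorProduct.lift B = TensorProduct.lift B ∘ₗ (f.rTensor N + g.lTensor M) := by
    ext m n
    simp [hB]
  simpa using Module.End.map_mem_maxGenEigenspace_of_comp_eq hlift
    (Module.End.tmul_mem_maxGenEigenspace_rTensor_add_lTensor hm hn)

end

theorem leftSymmetric_canonical_root_mul_general (A : Type*)
    [LieRing A] [LieAlgebra ℂ A]
    (mul : A →ₗ[ℂ] A →ₗ[ℂ] A)
    (hls : ∀ x y z : A,
      mul x (mul y z) - mul (mul x y) z = mul y (mul x z) - mul (mul y x) z)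
    (H : LieSubalgebra ℂ A)
    (hcanon : ∀ χ : H → ℂ,
      (⨅ x : H, Module.End.maxGenEigenspace (mul (x : A)) (χ x)) =
        ⨅ x : H, Module.End.maxGenEigenspace (mul (x : A) - mul.flip (x : A)) (χ x)) :
    ∀ lam mu : H → ℂ, ∀ v w : A,
      v ∈ (⨅ x : H, Module.End.maxGenEigenspace (mul (x : A)) (lam x)) →
      w ∈ (⨅ x : H, Module.End.maxGenEigenspace (mul (x : A)) (mu x)) →
      mul v w ∈ ⨅ x : H, Module.End.maxGenEigenspace (mul (x : A)) (lam x + mu x) := by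
  intro lam mu v w hv hw
  rw [hcanon lam] at hv
  simp only [Submodule.mem_iInf] at hv hw ⊢
  intro x
  have hleibniz : ∀ a b : A,
      mul x (mul a b) = mul ((mul (x : A) - mul.flip (x : A)) a) b + mul a (mul x b) := by
    intro a b
    simp only [LinearMap.sub_apply, LinearMap.flip_apply, map_sub]
    linear_combination (norm := module) hls x a b
  exact mul.apply_mem_maxGenEigenspace_of_leibniz hleibniz (hv x) (hw x)

/-- For the canonical decomposition of a finite-dimensional complete left-symmetric
algebra over `ℂ` one has `A^λ · A^μ ⊆ A^{λ+μ}`; in particular `A^0` is a subalgebra. -/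
theorem leftSymmetric_canonical_root_mul (A : Type*)
    [LieRing A] [LieAlgebra ℂ A] [FiniteDimensional ℂ A]
    (mul : A →ₗ[ℂ] A →ₗ[ℂ] A)
    (hbr : ∀ x y : A, ⁅x, y⁆ = mul x y - mul y x)
    (hls : ∀ x y z : A,
      mul x (mul y z) - mul (mul x y) z = mul y (mul x z) - mul (mul y x) z)
    (hcomplete : ∀ x : A, IsNilpotent (mul.flip x))
    (H : LieSubalgebra ℂ A) (hH : H.IsCartanSubalgebra)
    (hcanon : ∀ χ : H → ℂ,
      (⨅ x : H, Module.End.maxGenEigenspace (mul (x : A)) (χ x)) =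
        ⨅ x : H, Module.End.maxGenEigenspace (mul (x : A) - mul.flip (x : A)) (χ x)) :
    ∀ lam mu : H → ℂ, ∀ v w : A,
      v ∈ (⨅ x : H, Module.End.maxGenEigenspace (mul (x : A)) (lam x)) →
      w ∈ (⨅ x : H, Module.End.maxGenEigenspace (mul (x : A)) (mu x)) →
      mul v w ∈ ⨅ x : H, Module.End.maxGenEigenspace (mul (x : A)) (lam x + mu x) :=
  leftSymmetric_canonical_root_mul_general A mul hls H hcanon
end

section
/- Let A be a finite-dimensional complete left-symmetric algebra over a field F of characteristic zero. Then Tr(R(x)∘R(x)∘R(y)) = 0 for all x,y ∈ A. -/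
/-- In a finite-dimensional complete left-symmetric algebra over a field of
characteristic zero, `Tr(R(x)∘R(x)∘R(y)) = 0` for all `x, y`. -/
theorem leftSymmetric_complete_trace_RRR (F : Type*) [Field F] [CharZero F] (A : Type*)
    [AddCommGroup A] [Module F A] [FiniteDimensional F A]
    (mul : A →ₗ[F] A →ₗ[F] A)
    (hls : ∀ x y z : A,
      mul x (mul y z) - mul (mul x y) z = mul y (mul x z) - mul (mul y x) z)
    (hcomplete : ∀ x : A, IsNilpotent (mul.flip x)) :
    ∀ x y : A,
      LinearMap.trace F A ((mul.flip x) ∘ₗ (mul.flip x) ∘ₗ (mul.flip y)) = 0 := by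
  intro x y
  set R : A → Module.End F A := fun a => mul.flip a with hR
  set L : A → Module.End F A := fun a => mul a with hL
  -- trace of each R is zero (nilpotent)
  have htr0 : ∀ a : A, LinearMap.trace F A (R a) = 0 := fun a =>
    IsNilpotent.eq_zero (LinearMap.isNilpotent_trace_of_isNilpotent (hcomplete a))
  -- operator identity from left symmetry
  have star : ∀ a b : A, R (mul a b) = R b * R a + L a * R b - R b * L a := by
    intro a b
    ext c
    have h := hls c a b
    have h2 : mul c (mul a b) = mul (mul c a) b + (mul a (mul c b) - mul (mul a c) b) := by
      rw [← h]; abel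
    simp only [hR, hL, Module.End.mul_apply, LinearMap.sub_apply, LinearMap.add_apply,
      LinearMap.flip_apply]
    rw [h2]; abel
  -- trace of R a * R b is zero
  have h2 : ∀ a b : A, LinearMap.trace F A (R a * R b) = 0 := by
    intro a b
    have ht := congrArg (LinearMap.trace F A) (star b a)
    rw [htr0 (mul b a), map_sub, map_add, LinearMap.trace_mul_comm F (L b) (R a)] at ht
    have : LinearMap.trace F A (R a * R b) = 0 := by linear_combination -ht
    exact this
  -- main computation
  have hkey : R x * (R x * R y) =
      R x * R (mul y x) - R x * (L y * R x) + R x * (R x * L y) := by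
    have h := star y x
    have : R x * R y = R (mul y x) - L y * R x + R x * L y := by rw [h]; abel
    rw [this]; noncomm_ring
  have hgoal : LinearMap.trace F A (R x * (R x * R y)) = 0 := by
    rw [hkey, map_add, map_sub, h2 x (mul y x)]
    have e1 : LinearMap.trace F A (R x * (L y * R x)) =
        LinearMap.trace F A (R x * (R x * L y)) := by
      rw [LinearMap.trace_mul_comm F (R x) (L y * R x)]
      rw [show L y * R x * R x = L y * (R x * R x) from mul_assoc _ _ _]
      rw [LinearMap.trace_mul_comm F (L y) (R x * R x)]
      rw [show R x * R x * L y = R x * (R x * L y) from mul_assoc _ _ _]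
    rw [e1]; ring
  simpa [Module.End.mul_eq_comp] using hgoal
end

section
/- Let A be a finite-dimensional complete left-symmetric algebra over ℂ, and let H be a Cartan subalgebra of the commutator Lie algebra of A for which the root decomposition is canonical. Write A^χ = ⋂_{x∈H} maxGenEigenspace(L(x), χ(x)), and assume dim A^χ ≤ 1 for every χ : H → ℂ. Let λ : H → ℂ be a function with λ(x₀) ≠ 0 for some x₀ ∈ H. Then for all v ∈ A^λ and w ∈ A^{−λ} one has v·w = w·v, i.e., [v,w] = 0. -/
/-!
Left-symmetry says `x·(m·n) = (ad(x) m)·n + m·(x·n)`, so the product of root vectors is a root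
vector for the sum of the roots; in particular `v·w` and `w·v` lie in `A^0 = H`. Since every root
space is a line invariant under `L(x)` and `ad(x)`, both act on `A^χ` as the scalar `χ(x)`, so right
multiplication by `H` kills root vectors. The vectors `e_k = L(v)^k v` lie in `A^{(k+1)λ}`, hence
vanish for large `k` because `λ(x₀) ≠ 0`, and left-symmetry gives
`w·e_{k+1} = -(λ(v·w) - λ(w·v)) (k+2 choose 2) e_k`; at the top of the chain this forces
`λ(v·w) = λ(w·v)`, i.e. `L([v,w])` kills `v`. But `H` is a line containing `x₀`, and
`L(x₀) v = λ(x₀) v ≠ 0`, so `[v,w] = 0`.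
-/

open Module Module.End LieModule LieAlgebra

section LinearAlgebra

theorem LinearMap.apply_mem_maxGenEigenspace_add {R M N P : Type*} [CommRing R]
    [AddCommGroup M] [Module R M] [AddCommGroup N] [Module R N] [AddCommGroup P] [Module R P]
    (B : M →ₗ[R] N →ₗ[R] P) {S : End R M} {U : End R N} {T : End R P}
    (hB : ∀ m n, T (B m n) = B (S m) n + B m (U n)) {a b : R} {m : M} {n : N}
    (hm : m ∈ S.maxGenEigenspace a) (hn : n ∈ U.maxGenEigenspace b) :
    B m n ∈ T.maxGenEigenspace (a + b) := by
  set S' := S - a • 1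
  set U' := U - b • 1
  set T' := T - (a + b) • 1
  have hB' : ∀ m n, T' (B m n) = B (S' m) n + B m (U' n) := by
    intro m n
    simp only [T', S', U', LinearMap.sub_apply, LinearMap.smul_apply, one_apply, map_sub,
      map_smul, hB, add_smul, LinearMap.add_apply]
    abel
  -- `T'` acts on `B m n` like `S' ⊗ 1 + 1 ⊗ U'`, so nilpotency orders add up.
  have key : ∀ k i j (m : M) (n : N), i + j = k → (S' ^ i) m = 0 → (U' ^ j) n = 0 →
      (T' ^ k) (B m n) = 0 := by
    intro k
    induction k with
    | zero =>
      rintro i j m n hij hm -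
      obtain rfl : i = 0 := by omega
      simp_all
    | succ k ih =>
      rintro (_ | i) (_ | j) m n hij hm hn
      · simp_all
      · simp_all
      · simp_all
      · rw [pow_succ, mul_apply, hB', map_add,
          ih i (j + 1) _ n (by omega) (by rwa [← mul_apply, ← pow_succ]) hn,
          ih (i + 1) j m _ (by omega) hm (by rwa [← mul_apply, ← pow_succ]), add_zero]
  obtain ⟨i, hi⟩ := (mem_maxGenEigenspace _ _ _).1 hm
  obtain ⟨j, hj⟩ := (mem_maxGenEigenspace _ _ _).1 hn
  exact (mem_maxGenEigenspace _ _ _).2 ⟨i + j, key _ i j m n rfl hi hj⟩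

variable {K V : Type*} [Field K] [AddCommGroup V] [Module K V]

theorem Submodule.eq_span_singleton_of_finrank_le_one [FiniteDimensional K V]
    {S : Submodule K V} (hS : finrank K S ≤ 1) {z : V} (hz : z ∈ S) (hz0 : z ≠ 0) :
    S = K ∙ z :=
  (eq_of_le_of_finrank_le (by simpa) (by rwa [finrank_span_singleton hz0])).symm

theorem Module.End.apply_eq_smul_of_finrank_le_one [FiniteDimensional K V] {T : End K V}
    {c : K} {S : Submodule K V} (hS : finrank K S ≤ 1) (hTS : ∀ z ∈ S, T z ∈ S)
    (hS_le : S ≤ T.maxGenEigenspace c) {z : V} (hz : z ∈ S) : T z = c • z := by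
  rcases eq_or_ne z 0 with rfl | hz0
  · simp
  obtain ⟨t, ht⟩ := Submodule.mem_span_singleton.1 <|
    Submodule.eq_span_singleton_of_finrank_le_one hS hz hz0 ▸ hTS z hz
  have hzt : z ∈ T.eigenspace t := mem_eigenspace_iff.2 ht.symm
  obtain rfl : t = c := by
    by_contra htc
    exact hz0 <| Submodule.disjoint_def.1 (T.disjoint_genEigenspace htc 1 ⊤) z hzt (hS_le hz)
  exact ht.symm

theorem Module.End.exists_eq_zero_of_apply_eq_smul {ι : Type*} [Infinite ι]
    [FiniteDimensional K V] (T : End K V) {μ : ι → K} (hμ : Function.Injective μ)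
    {f : ι → V} (hf : ∀ i, T (f i) = μ i • f i) : ∃ i, f i = 0 := by
  by_contra! hf0
  have := (T.eigenvectors_linearIndependent' μ hμ f fun i ↦
    ⟨mem_eigenspace_iff.2 (hf i), hf0 i⟩).finite_of_isNoetherian
  exact not_finite ι

end LinearAlgebra

section LeftSymmetric

variable {R A : Type*} [CommRing R] [AddCommGroup A] [Module R A]

def IsLeftSymmetric (mul : A →ₗ[R] A →ₗ[R] A) : Prop :=
  ∀ x y z : A, mul x (mul y z) - mul (mul x y) z = mul y (mul x z) - mul (mul y x) z

variable {mul : A →ₗ[R] A →ₗ[R] A}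

theorem IsLeftSymmetric.mul_mul_eq (hls : IsLeftSymmetric mul) (x m n : A) :
    mul x (mul m n) = mul (mul x m - mul m x) n + mul m (mul x n) := by
  rw [map_sub, LinearMap.sub_apply, eq_add_of_sub_eq (hls x m n)]
  abel

theorem IsLeftSymmetric.mul_mem_maxGenEigenspace_add (hls : IsLeftSymmetric mul) {x m n : A}
    {a b : R} (hm : m ∈ maxGenEigenspace (mul x - mul.flip x) a)
    (hn : n ∈ maxGenEigenspace (mul x) b) : mul m n ∈ maxGenEigenspace (mul x) (a + b) :=
  mul.apply_mem_maxGenEigenspace_add (fun m n ↦ hls.mul_mul_eq x m n) hm hn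

theorem IsLeftSymmetric.mul_pow_succ_apply (hls : IsLeftSymmetric mul) {v w : A} {p q : R}
    (hp : ∀ k : ℕ, mul (mul v w) ((mul v ^ k) v) = ((k + 1) * p) • (mul v ^ k) v)
    (hq : ∀ k : ℕ, mul (mul w v) ((mul v ^ k) v) = ((k + 1) * q) • (mul v ^ k) v)
    (hvwv : mul v (mul w v) = 0) (k : ℕ) :
    mul w ((mul v ^ (k + 1)) v) = (-((p - q) * (k + 2).choose 2)) • (mul v ^ k) v := by
  have hstep : ∀ z, mul w (mul v z) = mul v (mul w z) + mul (mul w v) z - mul (mul v w) z :=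
    fun z ↦ by rw [← sub_add_cancel (mul w (mul v z)) (mul (mul w v) z), hls w v z]; abel
  induction k with
  | zero =>
    have hp0 : mul (mul v w) v = p • v := by simpa using hp 0
    have hq0 : mul (mul w v) v = q • v := by simpa using hq 0
    rw [pow_one, pow_zero, one_apply, hstep, hvwv, hp0, hq0, Nat.choose_self]
    module
  | succ k ih =>
    have hchoose : (k + 1 + 2).choose 2 = (k + 2).choose 2 + (k + 2) :=
      (Nat.choose_succ_succ' (k + 2) 1).trans (by rw [Nat.choose_one_right, add_comm])
    rw [pow_succ', mul_apply, hstep, ih, map_smul, ← mul_apply, ← pow_succ', hq, hp, hchoose]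
    push_cast
    module

end LeftSymmetric

theorem IsLeftSymmetric.eq_of_mul_pow_apply_eq_zero {K A : Type*} [Field K] [CharZero K]
    [AddCommGroup A] [Module K A] {mul : A →ₗ[K] A →ₗ[K] A} (hls : IsLeftSymmetric mul)
    {v w : A} {p q : K}
    (hp : ∀ k : ℕ, mul (mul v w) ((mul v ^ k) v) = ((k + 1) * p) • (mul v ^ k) v)
    (hq : ∀ k : ℕ, mul (mul w v) ((mul v ^ k) v) = ((k + 1) * q) • (mul v ^ k) v)
    (hvwv : mul v (mul w v) = 0) (hv : v ≠ 0) (hn : ∃ n, (mul v ^ n) v = 0) : p = q := by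
  classical
  obtain ⟨k, hk⟩ : ∃ k, Nat.find hn = k + 1 :=
    Nat.exists_eq_succ_of_ne_zero fun h ↦ hv <| by simpa [h] using Nat.find_spec hn
  have htop : (mul v ^ (k + 1)) v = 0 := hk ▸ Nat.find_spec hn
  have hbelow : (mul v ^ k) v ≠ 0 := Nat.find_min hn (by omega)
  have hchoose : ((k + 2).choose 2 : K) ≠ 0 := Nat.cast_ne_zero.2 (Nat.choose_pos (by omega)).ne'
  have h := hls.mul_pow_succ_apply hp hq hvwv k
  rw [htop, map_zero, eq_comm, smul_eq_zero] at h
  simpa [hbelow, hchoose, sub_eq_zero] using h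

section Cartan

variable {K A : Type*} [Field K] [LieRing A] [LieAlgebra K A]
  (mul : A →ₗ[K] A →ₗ[K] A) (H : LieSubalgebra K A)

def leftWeightSpace (χ : H → K) : Submodule K A :=
  ⨅ x : H, maxGenEigenspace (mul x) (χ x)

def HasCanonicalRootDecomposition : Prop :=
  ∀ χ : H → K, leftWeightSpace mul H χ = ⨅ x : H, maxGenEigenspace (mul x - mul.flip x) (χ x)

variable {mul H}

theorem mem_leftWeightSpace {χ : H → K} {z : A} :
    z ∈ leftWeightSpace mul H χ ↔ ∀ x : H, z ∈ maxGenEigenspace (mul x) (χ x) :=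
  Submodule.mem_iInf _

theorem HasCanonicalRootDecomposition.mem_maxGenEigenspace
    (hcanon : HasCanonicalRootDecomposition mul H) {χ : H → K} {z : A}
    (hz : z ∈ leftWeightSpace mul H χ) (x : H) :
    z ∈ maxGenEigenspace (mul x - mul.flip x) (χ x) :=
  Submodule.mem_iInf _ |>.1 (hcanon χ ▸ hz) x

theorem IsLeftSymmetric.mul_mem_leftWeightSpace (hls : IsLeftSymmetric mul)
    (hcanon : HasCanonicalRootDecomposition mul H) {χ₁ χ₂ : H → K} {v w : A}
    (hv : v ∈ leftWeightSpace mul H χ₁) (hw : w ∈ leftWeightSpace mul H χ₂) :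
    mul v w ∈ leftWeightSpace mul H (χ₁ + χ₂) :=
  mem_leftWeightSpace.2 fun x ↦
    hls.mul_mem_maxGenEigenspace_add (hcanon.mem_maxGenEigenspace hv x)
      (mem_leftWeightSpace.1 hw x)

theorem LieModule.toEnd_eq_mul_sub_flip (hbr : ∀ x y : A, ⁅x, y⁆ = mul x y - mul y x) (x : H) :
    toEnd K H A x = mul x - mul.flip x := by
  ext m
  simp [hbr]

theorem HasCanonicalRootDecomposition.leftWeightSpace_eq_genWeightSpace [LieRing.IsNilpotent H]
    (hbr : ∀ x y : A, ⁅x, y⁆ = mul x y - mul y x) (hcanon : HasCanonicalRootDecomposition mul H)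
    (χ : H → K) : leftWeightSpace mul H χ = (genWeightSpace A χ : Submodule K A) := by
  rw [hcanon χ, genWeightSpace, LieSubmodule.iInf_toSubmodule]
  exact iInf_congr fun x ↦ by rw [← toEnd_eq_mul_sub_flip hbr x]; rfl

theorem HasCanonicalRootDecomposition.leftWeightSpace_zero [H.IsCartanSubalgebra]
    [IsNoetherian K A] (hbr : ∀ x y : A, ⁅x, y⁆ = mul x y - mul y x)
    (hcanon : HasCanonicalRootDecomposition mul H) :
    leftWeightSpace mul H 0 = H.toSubmodule := by
  rw [hcanon.leftWeightSpace_eq_genWeightSpace hbr, ← rootSpace, rootSpace_zero_eq,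
    LieSubalgebra.coe_toLieSubmodule]

theorem HasCanonicalRootDecomposition.lie_mem_leftWeightSpace [LieRing.IsNilpotent H]
    (hbr : ∀ x y : A, ⁅x, y⁆ = mul x y - mul y x) (hcanon : HasCanonicalRootDecomposition mul H)
    {χ : H → K} {z : A} (hz : z ∈ leftWeightSpace mul H χ) (x : H) :
    ⁅(x : A), z⁆ ∈ leftWeightSpace mul H χ := by
  rw [hcanon.leftWeightSpace_eq_genWeightSpace hbr] at hz ⊢
  exact (genWeightSpace A χ).lie_mem (x := x) hz

theorem HasCanonicalRootDecomposition.lie_eq_smul [LieRing.IsNilpotent H]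
    [FiniteDimensional K A]
    (hbr : ∀ x y : A, ⁅x, y⁆ = mul x y - mul y x) (hcanon : HasCanonicalRootDecomposition mul H)
    (hdim : ∀ χ : H → K, finrank K (leftWeightSpace mul H χ) ≤ 1)
    {χ : H → K} {z : A} (hz : z ∈ leftWeightSpace mul H χ) (x : H) :
    ⁅(x : A), z⁆ = χ x • z := by
  have hlie : ∀ z, (mul x - mul.flip x) z = ⁅(x : A), z⁆ := fun z ↦ by simp [hbr]
  rw [← hlie]
  exact apply_eq_smul_of_finrank_le_one (hdim χ)
    (fun z' hz' ↦ hlie z' ▸ hcanon.lie_mem_leftWeightSpace hbr hz' x)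
    (fun _ hz' ↦ hcanon.mem_maxGenEigenspace hz' x) hz

variable [H.IsCartanSubalgebra] [FiniteDimensional K A]

theorem IsLeftSymmetric.mul_mem_of_add_eq_zero (hls : IsLeftSymmetric mul)
    (hbr : ∀ x y : A, ⁅x, y⁆ = mul x y - mul y x) (hcanon : HasCanonicalRootDecomposition mul H)
    {χ₁ χ₂ : H → K} (hχ : χ₁ + χ₂ = 0) {v w : A}
    (hv : v ∈ leftWeightSpace mul H χ₁) (hw : w ∈ leftWeightSpace mul H χ₂) :
    mul v w ∈ H.toSubmodule := by
  simpa [← hcanon.leftWeightSpace_zero hbr, hχ] using hls.mul_mem_leftWeightSpace hcanon hv hw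

theorem IsLeftSymmetric.mul_coe_mem_leftWeightSpace (hls : IsLeftSymmetric mul)
    (hbr : ∀ x y : A, ⁅x, y⁆ = mul x y - mul y x) (hcanon : HasCanonicalRootDecomposition mul H)
    {χ : H → K} {z : A} (hz : z ∈ leftWeightSpace mul H χ) (x : H) :
    mul z x ∈ leftWeightSpace mul H χ := by
  simpa using hls.mul_mem_leftWeightSpace hcanon hz (χ₂ := 0)
    (hcanon.leftWeightSpace_zero hbr ▸ x.2)

theorem IsLeftSymmetric.coe_mul_mem_leftWeightSpace (hls : IsLeftSymmetric mul)
    (hbr : ∀ x y : A, ⁅x, y⁆ = mul x y - mul y x) (hcanon : HasCanonicalRootDecomposition mul H)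
    {χ : H → K} {z : A} (hz : z ∈ leftWeightSpace mul H χ) (x : H) :
    mul x z ∈ leftWeightSpace mul H χ := by
  rw [← sub_add_cancel (mul x z) (mul z x), ← hbr]
  exact add_mem (hcanon.lie_mem_leftWeightSpace hbr hz x)
    (hls.mul_coe_mem_leftWeightSpace hbr hcanon hz x)

theorem IsLeftSymmetric.coe_mul_eq_smul (hls : IsLeftSymmetric mul)
    (hbr : ∀ x y : A, ⁅x, y⁆ = mul x y - mul y x) (hcanon : HasCanonicalRootDecomposition mul H)
    (hdim : ∀ χ : H → K, finrank K (leftWeightSpace mul H χ) ≤ 1)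
    {χ : H → K} {z : A} (hz : z ∈ leftWeightSpace mul H χ) (x : H) :
    mul x z = χ x • z :=
  apply_eq_smul_of_finrank_le_one (hdim χ)
    (fun _ hz' ↦ hls.coe_mul_mem_leftWeightSpace hbr hcanon hz' x)
    (fun _ hz' ↦ mem_leftWeightSpace.1 hz' x) hz

theorem IsLeftSymmetric.mul_coe_eq_zero (hls : IsLeftSymmetric mul)
    (hbr : ∀ x y : A, ⁅x, y⁆ = mul x y - mul y x) (hcanon : HasCanonicalRootDecomposition mul H)
    (hdim : ∀ χ : H → K, finrank K (leftWeightSpace mul H χ) ≤ 1)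
    {χ : H → K} {z : A} (hz : z ∈ leftWeightSpace mul H χ) (x : H) : mul z x = 0 := by
  rw [← sub_sub_cancel (mul x z) (mul z x), ← hbr, hls.coe_mul_eq_smul hbr hcanon hdim hz,
    hcanon.lie_eq_smul hbr hdim hz, sub_self]

theorem IsLeftSymmetric.mul_mul_apply_eq_of_mem_leftWeightSpace_neg [CharZero K]
    (hls : IsLeftSymmetric mul)
    (hbr : ∀ x y : A, ⁅x, y⁆ = mul x y - mul y x) (hcanon : HasCanonicalRootDecomposition mul H)
    (hdim : ∀ χ : H → K, finrank K (leftWeightSpace mul H χ) ≤ 1)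
    {lam : H → K} {x₀ : H} (hx₀ : lam x₀ ≠ 0) {v w : A}
    (hv : v ∈ leftWeightSpace mul H lam) (hw : w ∈ leftWeightSpace mul H (-lam)) :
    mul (mul v w) v = mul (mul w v) v := by
  rcases eq_or_ne v 0 with rfl | hv0
  · simp
  let p : H := ⟨mul v w, hls.mul_mem_of_add_eq_zero hbr hcanon (add_neg_cancel lam) hv hw⟩
  let q : H := ⟨mul w v, hls.mul_mem_of_add_eq_zero hbr hcanon (neg_add_cancel lam) hw hv⟩
  have hchain : ∀ k : ℕ, (mul v ^ k) v ∈ leftWeightSpace mul H ((k + 1 : K) • lam) := by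
    intro k
    induction k with
    | zero => simpa using hv
    | succ k ih =>
      rw [pow_succ', mul_apply]
      convert hls.mul_mem_leftWeightSpace hcanon hv ih using 2
      push_cast
      module
  have hmul (x : H) (k : ℕ) : mul x ((mul v ^ k) v) = ((k + 1) * lam x) • (mul v ^ k) v :=
    hls.coe_mul_eq_smul hbr hcanon hdim (hchain k) x
  have hinj : Function.Injective fun k : ℕ ↦ (k + 1 : K) * lam x₀ := fun a b h ↦ by
    simpa [hx₀] using h
  have hpq : lam p = lam q := hls.eq_of_mul_pow_apply_eq_zero (hmul p) (hmul q)
    (hls.mul_coe_eq_zero hbr hcanon hdim hv q) hv0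
    (exists_eq_zero_of_apply_eq_smul (mul x₀) hinj (hmul x₀))
  rw [hls.coe_mul_eq_smul hbr hcanon hdim hv p, hls.coe_mul_eq_smul hbr hcanon hdim hv q, hpq]

end Cartan

theorem leftSymmetric_one_dimensional_opposite_roots_commute_general (A : Type*)
    [LieRing A] [LieAlgebra ℂ A] [FiniteDimensional ℂ A]
    (mul : A →ₗ[ℂ] A →ₗ[ℂ] A)
    (hbr : ∀ x y : A, ⁅x, y⁆ = mul x y - mul y x)
    (hls : ∀ x y z : A,
      mul x (mul y z) - mul (mul x y) z = mul y (mul x z) - mul (mul y x) z)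
    (H : LieSubalgebra ℂ A) (hH : H.IsCartanSubalgebra)
    (hcanon : ∀ χ : H → ℂ,
      (⨅ x : H, Module.End.maxGenEigenspace (mul (x : A)) (χ x)) =
        ⨅ x : H, Module.End.maxGenEigenspace (mul (x : A) - mul.flip (x : A)) (χ x))
    (hdim : ∀ χ : H → ℂ,
      Module.finrank ℂ
        (⨅ x : H, Module.End.maxGenEigenspace (mul (x : A)) (χ x) : Submodule ℂ A) ≤ 1)
    (lam : H → ℂ) (x₀ : H) (hx₀ : lam x₀ ≠ 0) :
    ∀ v w : A,
      v ∈ (⨅ x : H, Module.End.maxGenEigenspace (mul (x : A)) (lam x)) →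
      w ∈ (⨅ x : H, Module.End.maxGenEigenspace (mul (x : A)) (-(lam x))) →
      mul v w = mul w v := by
  intro v w hv hw
  rcases eq_or_ne v 0 with rfl | hv0
  · simp
  have hls : IsLeftSymmetric mul := hls
  have hcanon : HasCanonicalRootDecomposition mul H := hcanon
  have hcomm := hls.mul_mul_apply_eq_of_mem_leftWeightSpace_neg hbr hcanon hdim hx₀ hv hw
  have hlie_mem : mul v w - mul w v ∈ H.toSubmodule :=
    sub_mem (hls.mul_mem_of_add_eq_zero hbr hcanon (add_neg_cancel lam) hv hw)
      (hls.mul_mem_of_add_eq_zero hbr hcanon (neg_add_cancel lam) hw hv)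
  by_contra hne
  have hH_eq : H.toSubmodule = ℂ ∙ (mul v w - mul w v) :=
    Submodule.eq_span_singleton_of_finrank_le_one (hcanon.leftWeightSpace_zero hbr ▸ hdim 0)
      hlie_mem (sub_ne_zero.2 hne)
  have hx₀_mem : (x₀ : A) ∈ ℂ ∙ (mul v w - mul w v) := hH_eq ▸ x₀.2
  obtain ⟨s, hs⟩ := Submodule.mem_span_singleton.1 hx₀_mem
  have hx₀v := hls.coe_mul_eq_smul hbr hcanon hdim hv x₀
  rw [← hs, map_smul, map_sub, LinearMap.smul_apply, LinearMap.sub_apply, hcomm, sub_self,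
    smul_zero, eq_comm, smul_eq_zero] at hx₀v
  exact hx₀v.elim hx₀ hv0

/-- In a finite-dimensional complete left-symmetric algebra over `ℂ` whose canonical
decomposition has all root spaces of dimension at most one, elements of opposite
nonzero root spaces commute: `v·w = w·v` for `v ∈ A^λ`, `w ∈ A^{−λ}`. -/
theorem leftSymmetric_one_dimensional_opposite_roots_commute (A : Type*)
    [LieRing A] [LieAlgebra ℂ A] [FiniteDimensional ℂ A]
    (mul : A →ₗ[ℂ] A →ₗ[ℂ] A)
    (hbr : ∀ x y : A, ⁅x, y⁆ = mul x y - mul y x)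
    (hls : ∀ x y z : A,
      mul x (mul y z) - mul (mul x y) z = mul y (mul x z) - mul (mul y x) z)
    (hcomplete : ∀ x : A, IsNilpotent (mul.flip x))
    (H : LieSubalgebra ℂ A) (hH : H.IsCartanSubalgebra)
    (hcanon : ∀ χ : H → ℂ,
      (⨅ x : H, Module.End.maxGenEigenspace (mul (x : A)) (χ x)) =
        ⨅ x : H, Module.End.maxGenEigenspace (mul (x : A) - mul.flip (x : A)) (χ x))
    (hdim : ∀ χ : H → ℂ,
      Module.finrank ℂ
        (⨅ x : H, Module.End.maxGenEigenspace (mul (x : A)) (χ x) : Submodule ℂ A) ≤ 1)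
    (lam : H → ℂ) (x₀ : H) (hx₀ : lam x₀ ≠ 0) :
    ∀ v w : A,
      v ∈ (⨅ x : H, Module.End.maxGenEigenspace (mul (x : A)) (lam x)) →
      w ∈ (⨅ x : H, Module.End.maxGenEigenspace (mul (x : A)) (-(lam x))) →
      mul v w = mul w v :=
  leftSymmetric_one_dimensional_opposite_roots_commute_general A mul hbr hls H hH hcanon hdim lam x₀
    hx₀
end

section
/- Let A be the 3-dimensional complex vector space with basis e₋₁, e₀, e₁, equipped with the bilinear multiplication determined by e₀·e₁ = e₁, e₀·e₋₁ = −e₋₁, e₁·e₋₁ = e₋₁·e₁ = e₀, and all other products of basis vectors equal to zero (Auslander's algebra). Then: (1) this multiplication is left-symmetric; (2) A is complete, i.e., R(x) is nilpotent for every x ∈ A; and (3) A is simple, i.e., the only two-sided ideals of A (subspaces J with A·J ⊆ J and J·A ⊆ J) are 0 and A. -/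
/-- Auslander's 3-dimensional algebra: the bilinear multiplication on `ℂ³` (basis
`e₋₁, e₀, e₁`) determined by `e₀·e₁ = e₁`, `e₀·e₋₁ = −e₋₁`, `e₁·e₋₁ = e₋₁·e₁ = e₀`
(all other basis products zero) is left-symmetric, complete, and simple. -/
theorem auslander_algebra_leftSymmetric_complete_simple
    (mul : (Fin 3 → ℂ) →ₗ[ℂ] (Fin 3 → ℂ) →ₗ[ℂ] (Fin 3 → ℂ))
    -- basis vectors: `em1 = e₋₁`, `e0 = e₀`, `e1 = e₁`
    (hm1m1 : mul ![1,0,0] ![1,0,0] = 0)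
    (hm10 : mul ![1,0,0] ![0,1,0] = 0)
    (hm11 : mul ![1,0,0] ![0,0,1] = ![0,1,0])
    (h0m1 : mul ![0,1,0] ![1,0,0] = -![1,0,0])
    (h00 : mul ![0,1,0] ![0,1,0] = 0)
    (h01 : mul ![0,1,0] ![0,0,1] = ![0,0,1])
    (h1m1 : mul ![0,0,1] ![1,0,0] = ![0,1,0])
    (h10 : mul ![0,0,1] ![0,1,0] = 0)
    (h11 : mul ![0,0,1] ![0,0,1] = 0) :
    (∀ x y z : Fin 3 → ℂ,
      mul x (mul y z) - mul (mul x y) z = mul y (mul x z) - mul (mul y x) z) ∧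
    (∀ x : Fin 3 → ℂ, IsNilpotent (mul.flip x)) ∧
    (∀ J : Submodule ℂ (Fin 3 → ℂ),
      (∀ (a : Fin 3 → ℂ), ∀ j ∈ J, mul a j ∈ J) →
      (∀ j ∈ J, ∀ (a : Fin 3 → ℂ), mul j a ∈ J) →
      J = ⊥ ∨ J = ⊤) := by
  have hdec : ∀ v : Fin 3 → ℂ,
      v = v 0 • ![(1:ℂ),0,0] + v 1 • ![0,1,0] + v 2 • ![0,0,1] := by
    intro v; funext i; fin_cases i <;> simp
  have key : ∀ x y : Fin 3 → ℂ,
      mul x y = ![-(x 1 * y 0), x 0 * y 2 + x 2 * y 0, x 1 * y 2] := by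
    intro x y
    conv_lhs => rw [hdec x, hdec y]
    simp only [map_add, map_smul, LinearMap.add_apply, LinearMap.smul_apply,
      hm1m1, hm10, hm11, h0m1, h00, h01, h1m1, h10, h11,
      smul_zero, smul_neg]
    funext i; fin_cases i <;> simp <;> ring
  have hext : ∀ a b : Fin 3 → ℂ, a 0 = b 0 → a 1 = b 1 → a 2 = b 2 → a = b :=
    fun a b h0 h1 h2 => funext fun i => by fin_cases i <;> assumption
  refine ⟨?_, ?_, ?_⟩
  · intro x y z
    simp only [key]
    refine hext _ _ ?_ ?_ ?_ <;> simp [Pi.zero_apply] <;> ring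
  · intro x
    refine ⟨3, LinearMap.ext fun y => ?_⟩
    show mul (mul (mul y x) x) x = 0
    simp only [key]
    refine hext _ _ ?_ ?_ ?_ <;>
      simp only [Matrix.cons_val_zero, Matrix.cons_val_one, Matrix.head_cons,
        Matrix.cons_val_two, Matrix.tail_cons, Pi.zero_apply] <;> ring
  · intro J hL hR
    by_cases hJ : J = ⊥
    · exact Or.inl hJ
    · right
      obtain ⟨j, hjJ, hj0⟩ := Submodule.exists_mem_ne_zero_of_ne_bot hJ
      -- if e₀ ∈ J then all basis vectors in J
      have htop : ∀ (hm1 : ![(1:ℂ),0,0] ∈ J) (h0 : ![(0:ℂ),1,0] ∈ J)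
          (h1 : ![(0:ℂ),0,1] ∈ J), J = ⊤ := by
        intro hm1 h0 h1
        rw [Submodule.eq_top_iff']
        intro v
        rw [hdec v]
        exact J.add_mem (J.add_mem (J.smul_mem _ hm1) (J.smul_mem _ h0)) (J.smul_mem _ h1)
      have hbasis : ∀ (h0 : ![(0:ℂ),1,0] ∈ J), J = ⊤ := by
        intro h0
        have hm1 : ![(1:ℂ),0,0] ∈ J := by
          have h' : mul ![(0:ℂ),1,0] ![1,0,0] ∈ J := hR _ h0 ![1,0,0]
          rw [h0m1] at h'
          have := J.neg_mem h'
          simpa using this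
        have h1 : ![(0:ℂ),0,1] ∈ J := by
          have h' : mul ![(0:ℂ),1,0] ![0,0,1] ∈ J := hR _ h0 ![0,0,1]
          rwa [h01] at h'
        exact htop hm1 h0 h1
      by_cases ha : j 0 ≠ 0
      · -- mul e1 j = (j 0) • e0
        have h' : mul ![(0:ℂ),0,1] j ∈ J := hL _ _ hjJ
        rw [key] at h'
        have heq : ![-((0:ℂ)*1 * j 0), (0:ℂ) * j 2 + 1 * j 0, (0:ℂ)*1 * j 2]
            = j 0 • ![(0:ℂ),1,0] := by
          funext i; fin_cases i <;> simp
        have h'' : j 0 • ![(0:ℂ),1,0] ∈ J := by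
          have : (![(0:ℂ),0,1] 1 * j 0) = 0 * j 0 := by norm_num
          convert h' using 1
          funext i; fin_cases i <;> simp
        exact hbasis (by simpa [ha] using J.smul_mem (j 0)⁻¹ h'')
      · push_neg at ha
        by_cases hc : j 2 ≠ 0
        · -- mul em1 j = (j 2) • e0
          have h' : mul ![(1:ℂ),0,0] j ∈ J := hL _ _ hjJ
          rw [key] at h'
          have h'' : j 2 • ![(0:ℂ),1,0] ∈ J := by
            convert h' using 1
            funext i; fin_cases i <;> simp
          exact hbasis (by simpa [hc] using J.smul_mem (j 2)⁻¹ h'')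
        · push_neg at hc
          have hb : j 1 ≠ 0 := by
            intro hb
            apply hj0
            funext i; fin_cases i <;> simp [ha, hb, hc]
          -- mul j e1 = (j 1) • e1 (since j 0 = 0)
          have h1 : ![(0:ℂ),0,1] ∈ J := by
            have h' : mul j ![(0:ℂ),0,1] ∈ J := hR _ hjJ _
            rw [key] at h'
            have h'' : j 1 • ![(0:ℂ),0,1] ∈ J := by
              convert h' using 1
              funext i; fin_cases i <;> simp [ha, hc]
            simpa [hb] using J.smul_mem (j 1)⁻¹ h''
          -- mul j em1 = -(j 1) • em1
          have hm1 : ![(1:ℂ),0,0] ∈ J := by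
            have h' : mul j ![(1:ℂ),0,0] ∈ J := hR _ hjJ _
            rw [key] at h'
            have h'' : j 1 • ![(1:ℂ),0,0] ∈ J := by
              have hn := J.neg_mem h'
              convert hn using 1
              funext i; fin_cases i <;> simp [ha, hc]
            simpa [hb] using J.smul_mem (j 1)⁻¹ h''
          -- mul em1 e1 = e0
          have h0 : ![(0:ℂ),1,0] ∈ J := by
            have h' : mul ![(1:ℂ),0,0] ![0,0,1] ∈ J := hL _ _ h1
            rwa [hm11] at h'
          exact htop hm1 h0 h1
end
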